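/- Assume condition (c3) holds and that the forms S_n pre-converge to S. Then condition (iii) implies condition (iv). -/

import Mathlib

open MeasureTheory Filter Topology

noncomputable section

namespace Mosco

variable {E : Type*} [MeasurableSpace E]

/-- The inner product of two real-valued functions with respect to a measure,
`⟨φ, ψ⟩ = ∫ φ ψ dμ`. -/
def ip (μ : Measure E) (φ ψ : E → ℝ) : ℝ := ∫ x, φ x * ψ x ∂μ

/-- The framework of Section 2.1: mutually singular probability measures `ν n`, `n : ℕ`
(`ν 0` playing the role of the limit measure `ν`), such that `L²(E, ν 0)` is separable,
together with disjoint sets `En n` carrying `ν n`, and a linear subset `F = 𝓕 ⊆ 𝓓`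
which is dense in `L²(E, ν 0)`. -/
structure Frame (E : Type*) [MeasurableSpace E] where
  ν : ℕ → Measure E
  prob : ∀ n, IsProbabilityMeasure (ν n)
  singular : ∀ m n, m ≠ n → (ν m).MutuallySingular (ν n)
  separableL2 : TopologicalSpace.SeparableSpace (Lp ℝ 2 (ν 0))
  En : ℕ → Set E
  measEn : ∀ n, MeasurableSet (En n)
  disjEn : ∀ m n, m ≠ n → Disjoint (En m) (En n)
  nullEn : ∀ n, ν n (En n)ᶜ = 0
  F : Set (E → ℝ)
  F_measurable : ∀ φ ∈ F, Measurable φ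
  F_memL2 : ∀ φ ∈ F, ∀ n, MemLp φ 2 (ν n)
  F_tendsto : ∀ φ ∈ F, Tendsto (fun n => ip (ν n) φ φ) atTop (𝓝 (ip (ν 0) φ φ))
  F_linear : ∀ φ ∈ F, ∀ ψ ∈ F, ∀ a b : ℝ, (fun x => a * φ x + b * ψ x) ∈ F
  F_dense : ∀ f : E → ℝ, Measurable f → MemLp f 2 (ν 0) → ∀ ε : ℝ, 0 < ε →
    ∃ φ ∈ F, ip (ν 0) (fun x => f x - φ x) (fun x => f x - φ x) < ε

/-- The set `𝓓`: everywhere defined measurable functions lying in every `L²(E, ν n)`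
whose `ν n`-norms converge to the `ν 0`-norm. -/
def Frame.D (fr : Frame E) : Set (E → ℝ) :=
  {φ | Measurable φ ∧ (∀ n, MemLp φ 2 (fr.ν n)) ∧
    Tendsto (fun n => ip (fr.ν n) φ φ) atTop (𝓝 (ip (fr.ν 0) φ φ))}

/-- The set `𝓒`: elements of `𝓓` satisfying conditions (c1) and (c2). -/
def Frame.C (fr : Frame E) : Set (E → ℝ) :=
  {φ | φ ∈ fr.D ∧ (∀ n, 1 ≤ n → ∃ g ∈ fr.F, φ =ᵐ[fr.ν n] g) ∧
    ∀ ψ ∈ fr.F, Tendsto (fun n => ip (fr.ν n) φ ψ) atTop (𝓝 (ip (fr.ν 0) φ ψ))}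

/-- The set `𝓥` of multipliers mapping `𝓓` into `𝓓` and `𝓕` into `𝓕`. -/
def Frame.V (fr : Frame E) : Set (E → ℝ) :=
  {ψ | Measurable ψ ∧ (∀ n, MemLp ψ 2 (fr.ν n)) ∧
    (∀ σ ∈ fr.D, (fun x => σ x * ψ x) ∈ fr.D) ∧
    (∀ τ ∈ fr.F, (fun x => τ x * ψ x) ∈ fr.F)}

/-- `w`-convergence of a sequence `φs` (with `φs n` regarded as an element of
`L²(E, ν n)`) to `φ ∈ L²(E, ν 0)`. -/
def Frame.WConv (fr : Frame E) (φs : ℕ → E → ℝ) (φ : E → ℝ) : Prop :=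
  ∀ ψ ∈ fr.C, Tendsto (fun n => ip (fr.ν n) (φs n) ψ) atTop (𝓝 (ip (fr.ν 0) φ ψ))

/-- `s`-convergence: `w`-convergence together with convergence of the norms. -/
def Frame.SConv (fr : Frame E) (φs : ℕ → E → ℝ) (φ : E → ℝ) : Prop :=
  fr.WConv φs φ ∧
  Tendsto (fun n => ip (fr.ν n) (φs n) (φs n)) atTop (𝓝 (ip (fr.ν 0) φ φ))

open Classical

/-- The `L²(μ)`-class of a function (zero if the function is not square-integrable). -/
def toL2 (μ : Measure E) (φ : E → ℝ) : Lp ℝ 2 μ :=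
  if h : MemLp φ 2 μ then h.toLp φ else 0

/-- A strongly continuous semigroup of bounded linear operators on `L²(E, μ)`. -/
structure Semigroup2 {E : Type*} [MeasurableSpace E] (μ : Measure E) where
  T : ℝ → Lp ℝ 2 μ →L[ℝ] Lp ℝ 2 μ
  T_zero : T 0 = ContinuousLinearMap.id ℝ (Lp ℝ 2 μ)
  T_add : ∀ s t : ℝ, 0 ≤ s → 0 ≤ t → T (s + t) = (T s).comp (T t)
  strongCont : ∀ f : Lp ℝ 2 μ, Tendsto (fun t => T t f) (𝓝[≥] (0:ℝ)) (𝓝 f)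

namespace Semigroup2

variable {μ : Measure E}

/-- The semigroup is a contraction semigroup. -/
def IsContraction (sg : Semigroup2 μ) : Prop := ∀ t : ℝ, 0 ≤ t → ‖sg.T t‖ ≤ 1

/-- The adjoint (dual) semigroup `T'`. -/
def dual (sg : Semigroup2 μ) (t : ℝ) : Lp ℝ 2 μ →L[ℝ] Lp ℝ 2 μ :=
  ContinuousLinearMap.adjoint (sg.T t)

/-- Membership in the domain `D(A)` of the generator. -/
def memDom (sg : Semigroup2 μ) (f : Lp ℝ 2 μ) : Prop :=
  ∃ g : Lp ℝ 2 μ, Tendsto (fun t : ℝ => t⁻¹ • (sg.T t f - f)) (𝓝[>] (0:ℝ)) (𝓝 g)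

/-- The generator `A` (zero off its domain). -/
def gen (sg : Semigroup2 μ) (f : Lp ℝ 2 μ) : Lp ℝ 2 μ :=
  if h : sg.memDom f then Exists.choose h else 0

/-- Membership in the domain `D(A')` of the adjoint generator. -/
def memDom' (sg : Semigroup2 μ) (f : Lp ℝ 2 μ) : Prop :=
  ∃ g : Lp ℝ 2 μ, Tendsto (fun t : ℝ => t⁻¹ • (sg.dual t f - f)) (𝓝[>] (0:ℝ)) (𝓝 g)

/-- The adjoint generator `A'` (zero off its domain). -/
def gen' (sg : Semigroup2 μ) (f : Lp ℝ 2 μ) : Lp ℝ 2 μ :=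
  if h : sg.memDom' f then Exists.choose h else 0

/-- The resolvent `G_β = (β - A)⁻¹ = ∫_0^∞ e^{-βt} T_t dt`. -/
def res (sg : Semigroup2 μ) (β : ℝ) (f : Lp ℝ 2 μ) : Lp ℝ 2 μ :=
  ∫ t in Set.Ioi (0:ℝ), Real.exp (-β * t) • sg.T t f

/-- The adjoint resolvent `G'_β`. -/
def res' (sg : Semigroup2 μ) (β : ℝ) (f : Lp ℝ 2 μ) : Lp ℝ 2 μ :=
  ∫ t in Set.Ioi (0:ℝ), Real.exp (-β * t) • sg.dual t f

/-- `u ∈ D(A) = D(S)`, at the level of functions. -/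
def memD (sg : Semigroup2 μ) (u : E → ℝ) : Prop := sg.memDom (toL2 μ u)

/-- `u ∈ D(A')`, at the level of functions. -/
def memD' (sg : Semigroup2 μ) (u : E → ℝ) : Prop := sg.memDom' (toL2 μ u)

/-- `A u`, at the level of functions. -/
def Af (sg : Semigroup2 μ) (u : E → ℝ) : E → ℝ := sg.gen (toL2 μ u)

/-- `A' u`, at the level of functions. -/
def Af' (sg : Semigroup2 μ) (u : E → ℝ) : E → ℝ := sg.gen' (toL2 μ u)

/-- `G_β u`, at the level of functions. -/
def Res (sg : Semigroup2 μ) (β : ℝ) (u : E → ℝ) : E → ℝ := sg.res β (toL2 μ u)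

/-- `G'_β u`, at the level of functions. -/
def Res' (sg : Semigroup2 μ) (β : ℝ) (u : E → ℝ) : E → ℝ := sg.res' β (toL2 μ u)

/-- `T_t u`, at the level of functions. -/
def Tf (sg : Semigroup2 μ) (t : ℝ) (u : E → ℝ) : E → ℝ := sg.T t (toL2 μ u)

/-- `T'_t u`, at the level of functions. -/
def Tf' (sg : Semigroup2 μ) (t : ℝ) (u : E → ℝ) : E → ℝ := sg.dual t (toL2 μ u)

/-- The bilinear form `S(u, v) = ⟨-A u, v⟩` associated with the semigroup. -/
def S (sg : Semigroup2 μ) (u v : E → ℝ) : ℝ := ip μ (fun x => -(sg.Af u x)) v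

/-- `S_β(u, v) = β ⟨u, v⟩ + S(u, v)`. -/
def Sb (sg : Semigroup2 μ) (β : ℝ) (u v : E → ℝ) : ℝ := β * ip μ u v + sg.S u v

end Semigroup2

/-- Definition 2.4 (i) and (ii): the forms `S n` pre-converge to `S 0`.
Here `sg n` is the semigroup on `L²(E, ν n)` and `sg 0` the limiting one. -/
def PreConv (fr : Frame E) (sg : ∀ n, Semigroup2 (fr.ν n)) : Prop :=
  (∀ φ : E → ℝ, Measurable φ → MemLp φ 2 (fr.ν 0) →
    ∀ nk : ℕ → ℕ, StrictMono nk →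
    ∀ φk : ℕ → E → ℝ, (∀ k, φk k ∈ fr.C ∧ (sg (nk k)).memD (φk k)) →
    (∀ ψ ∈ fr.C, Tendsto (fun k => ip (fr.ν (nk k)) (φk k) ψ)
      atTop (𝓝 (ip (fr.ν 0) φ ψ))) →
    (∃ M : ℝ, ∀ k, ip (fr.ν (nk k)) ((sg (nk k)).Af (φk k)) ((sg (nk k)).Af (φk k)) ≤ M) →
    (sg 0).memD φ ∧
      (sg 0).S φ φ ≤ liminf (fun k => (sg (nk k)).S (φk k) (φk k)) atTop) ∧
  (∀ ψ : E → ℝ, Measurable ψ → MemLp ψ 2 (fr.ν 0) → (sg 0).memD ψ →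
    ∃ ψs : ℕ → E → ℝ, (∀ n, ψs n ∈ fr.C ∧ (sg n).memD (ψs n)) ∧
      fr.SConv ψs ψ ∧
      (∃ M : ℝ, ∀ n, ip (fr.ν n) ((sg n).Af (ψs n)) ((sg n).Af (ψs n)) ≤ M) ∧
      limsup (fun n => (sg n).S (ψs n) (ψs n)) atTop ≤ (sg 0).S ψ ψ)

/-- Condition (iii) of Definition 2.4. -/
def CondIII (fr : Frame E) (sg : ∀ n, Semigroup2 (fr.ν n)) : Prop :=
  ∀ β : ℝ, 0 < β →
  ∀ u : E → ℝ, Measurable u → MemLp u 2 (fr.ν 0) → (sg 0).memD u →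
  ∀ us : ℕ → E → ℝ,
    (∀ n, us n ∈ fr.C ∧ (sg n).memD (us n) ∧ ∃ c ∈ fr.C, (sg n).Af (us n) =ᵐ[fr.ν n] c) →
    (∃ w : E → ℝ, Measurable w ∧ MemLp w 2 (fr.ν 0) ∧ fr.WConv us w) →
    (∃ M : ℝ, ∀ n, ip (fr.ν n) ((sg n).Af (us n)) ((sg n).Af (us n)) ≤ M) →
    (∀ ψ ∈ fr.C, ∀ ψs : ℕ → E → ℝ, (∀ n, ψs n ∈ fr.C) → fr.SConv ψs ψ →
      Tendsto (fun n => (sg n).Sb β (us n) (ψs n)) atTop (𝓝 ((sg 0).Sb β u ψ))) →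
    ∀ ψ : E → ℝ, Measurable ψ → MemLp ψ 2 (fr.ν 0) → (sg 0).memD ψ →
    ∀ ψs : ℕ → E → ℝ, (∀ n, ψs n ∈ fr.C ∧ (sg n).memD (ψs n)) → fr.SConv ψs ψ →
      (∃ M : ℝ, ∀ n, ip (fr.ν n) ((sg n).Af (ψs n)) ((sg n).Af (ψs n)) ≤ M) →
      limsup (fun n => (sg n).S (ψs n) (ψs n)) atTop ≤ (sg 0).S ψ ψ →
      Tendsto (fun n => (sg n).Sb β (ψs n) (us n)) atTop (𝓝 ((sg 0).Sb β ψ u))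

/-- Condition (iv) of Lemma 2.6. -/
def CondIV (fr : Frame E) (sg : ∀ n, Semigroup2 (fr.ν n)) : Prop :=
  ∀ β : ℝ, 0 < β →
  ∀ u : E → ℝ, Measurable u → MemLp u 2 (fr.ν 0) → (sg 0).memD u →
  ∀ us : ℕ → E → ℝ,
    (∀ n, us n ∈ fr.C ∧ (sg n).memD (us n) ∧ ∃ c ∈ fr.C, (sg n).Af (us n) =ᵐ[fr.ν n] c) →
    (∃ w : E → ℝ, Measurable w ∧ MemLp w 2 (fr.ν 0) ∧ fr.WConv us w) →
    (∃ M : ℝ, ∀ n, ip (fr.ν n) ((sg n).Af (us n)) ((sg n).Af (us n)) ≤ M) →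
    fr.WConv (fun n x => β * us n x - (sg n).Af (us n) x)
      (fun x => β * u x - (sg 0).Af u x) →
    fr.WConv us u

/-- The forms converge: pre-convergence together with condition (iii). -/
def Conv (fr : Frame E) (sg : ∀ n, Semigroup2 (fr.ν n)) : Prop :=
  PreConv fr sg ∧ CondIII fr sg

/-- Condition (c3): resolvents and adjoint resolvents of elements of `𝓒`
coincide a.e. with elements of `𝓒`. -/
def CondC3 (fr : Frame E) (sg : ∀ n, Semigroup2 (fr.ν n)) : Prop :=
  ∀ g ∈ fr.C, ∀ β : ℝ, 0 < β →
    (∃ u ∈ fr.C, (sg 0).Res β g =ᵐ[fr.ν 0] u) ∧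
    (∀ n, 1 ≤ n → ∃ u ∈ fr.C, (sg n).Res β g =ᵐ[fr.ν n] u) ∧
    (∃ u ∈ fr.C, (sg 0).Res' β g =ᵐ[fr.ν 0] u) ∧
    (∀ n, 1 ≤ n → ∃ u ∈ fr.C, (sg n).Res' β g =ᵐ[fr.ν n] u)

/-- Condition (c4): `D(S) ⊆ 𝓒` and `A(D(S)) ⊆ 𝓒`, up to `ν 0`-a.e. equality. -/
def CondC4 (fr : Frame E) (sg : ∀ n, Semigroup2 (fr.ν n)) : Prop :=
  ∀ φ : E → ℝ, Measurable φ → MemLp φ 2 (fr.ν 0) → (sg 0).memD φ →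
    (∃ u ∈ fr.C, φ =ᵐ[fr.ν 0] u) ∧ (∃ u ∈ fr.C, (sg 0).Af φ =ᵐ[fr.ν 0] u)

/-- Condition (c5): semigroups and adjoint semigroups applied to elements of `𝓒`
coincide a.e. with elements of `𝓒`. -/
def CondC5 (fr : Frame E) (sg : ∀ n, Semigroup2 (fr.ν n)) : Prop :=
  ∀ g ∈ fr.C, ∀ t : ℝ, 0 ≤ t →
    (∃ u ∈ fr.C, (sg 0).Tf t g =ᵐ[fr.ν 0] u) ∧
    (∀ n, 1 ≤ n → ∃ u ∈ fr.C, (sg n).Tf t g =ᵐ[fr.ν n] u) ∧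
    (∃ u ∈ fr.C, (sg 0).Tf' t g =ᵐ[fr.ν 0] u) ∧
    (∀ n, 1 ≤ n → ∃ u ∈ fr.C, (sg n).Tf' t g =ᵐ[fr.ν n] u)

/-!
Let `w` be the w-limit of `u_n` and `e = w - u`. A w-convergent sequence in `𝓒` is bounded, so
`S_{n,β}(u_n, u_n)` has a limit point `T`, and `β u_n - A_n u_n` is bounded, which gives the
hypothesis of (iii). For `g ∈ 𝓒` take a recovery sequence `ψ_n` of `G_β g`, which by (c3) agrees
a.e. with an element of `𝓒`. Lower semicontinuity (i) along `ψ_n - u_n → G_β g - w`, with (iii)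
for the mixed terms, gives `S_β(w, w) - T ≤ ⟪g, e⟫ + ⟪(β - A) e, G_β g⟫`. The right side is
linear in `g` and the left side does not depend on `g`, so the right side vanishes on `𝓒`, hence
on all of `L²(ν)` by density and continuity of `G_β`. At `g = (β - A) e` it equals
`2 ⟪(β - A) e, e⟫ ≥ 2 β ‖e‖²`, so `e = 0`.
-/

open scoped RealInnerProductSpace

section L2

variable {μ : Measure E} {f g : E → ℝ}

lemma toL2_of_memLp (hf : MemLp f 2 μ) : toL2 μ f = hf.toLp f := dif_pos hf

lemma toL2_coeFn (F : Lp ℝ 2 μ) : toL2 μ F = F := by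
  rw [toL2_of_memLp (Lp.memLp F)]
  exact Lp.toLp_coeFn F (Lp.memLp F)

lemma memLp_sub (hf : MemLp f 2 μ) (hg : MemLp g 2 μ) : MemLp (fun x => f x - g x) 2 μ :=
  hf.sub hg

lemma ae_eq_of_toL2_eq (hf : MemLp f 2 μ) (hg : MemLp g 2 μ) (h : toL2 μ f = toL2 μ g) :
    f =ᵐ[μ] g := by
  rw [toL2_of_memLp hf, toL2_of_memLp hg] at h
  exact (MemLp.toLp_eq_toLp_iff hf hg).1 h

lemma toL2_sub (hf : MemLp f 2 μ) (hg : MemLp g 2 μ) :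
    toL2 μ (fun x => f x - g x) = toL2 μ f - toL2 μ g := by
  rw [toL2_of_memLp hf, toL2_of_memLp hg, toL2_of_memLp (memLp_sub hf hg)]
  exact MemLp.toLp_sub hf hg

lemma toL2_const_mul (hf : MemLp f 2 μ) (c : ℝ) :
    toL2 μ (fun x => c * f x) = c • toL2 μ f := by
  rw [toL2_of_memLp hf, toL2_of_memLp (f := fun x => c * f x) (hf.const_mul c)]
  exact MemLp.toLp_const_smul c hf

lemma ip_eq_inner (hf : MemLp f 2 μ) (hg : MemLp g 2 μ) :
    ip μ f g = ⟪toL2 μ f, toL2 μ g⟫ := by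
  rw [toL2_of_memLp hf, toL2_of_memLp hg, L2.inner_def]
  refine integral_congr_ae ?_
  filter_upwards [hf.coeFn_toLp, hg.coeFn_toLp] with x hfx hgx
  simp [hfx, hgx, mul_comm]

lemma ip_self_eq_norm_sq (hf : MemLp f 2 μ) : ip μ f f = ‖toL2 μ f‖ ^ 2 := by
  rw [ip_eq_inner hf hf, real_inner_self_eq_norm_sq]

lemma norm_toL2_eq_sqrt (hf : MemLp f 2 μ) : ‖toL2 μ f‖ = √(ip μ f f) := by
  rw [ip_self_eq_norm_sq hf, Real.sqrt_sq (norm_nonneg _)]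

lemma norm_toL2_le_sqrt (hf : MemLp f 2 μ) {M : ℝ} (h : ip μ f f ≤ M) :
    ‖toL2 μ f‖ ≤ √M :=
  norm_toL2_eq_sqrt hf ▸ Real.sqrt_le_sqrt h

lemma ip_self_nonneg (f : E → ℝ) : 0 ≤ ip μ f f :=
  integral_nonneg fun _ => mul_self_nonneg _

lemma ip_congr_ae {f' g' : E → ℝ} (hf : f =ᵐ[μ] f') (hg : g =ᵐ[μ] g') :
    ip μ f g = ip μ f' g' := by
  refine integral_congr_ae ?_
  filter_upwards [hf, hg] with x hfx hgx
  rw [hfx, hgx]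

lemma ip_comm (f g : E → ℝ) : ip μ f g = ip μ g f := by
  simp only [ip, mul_comm]

lemma ip_const_mul_left (c : ℝ) (f g : E → ℝ) :
    ip μ (fun x => c * f x) g = c * ip μ f g := by
  simp only [ip, mul_assoc, integral_const_mul]

lemma ip_const_mul_right (c : ℝ) (f g : E → ℝ) :
    ip μ f (fun x => c * g x) = c * ip μ f g := by
  rw [ip_comm, ip_const_mul_left, ip_comm]

@[simp]
lemma ip_zero_left (g : E → ℝ) : ip μ (fun _ => 0) g = 0 := by
  simp [ip]

@[simp]
lemma ip_zero_right (f : E → ℝ) : ip μ f (fun _ => 0) = 0 := by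
  simp [ip]

lemma ip_neg_left (f g : E → ℝ) : ip μ (fun x => -f x) g = -ip μ f g := by
  simp only [ip, neg_mul, integral_neg]

lemma ip_sub_left {h : E → ℝ} (hf : MemLp f 2 μ) (hg : MemLp g 2 μ) (hh : MemLp h 2 μ) :
    ip μ (fun x => f x - g x) h = ip μ f h - ip μ g h := by
  rw [ip_eq_inner (memLp_sub hf hg) hh, ip_eq_inner hf hh, ip_eq_inner hg hh, toL2_sub hf hg,
    inner_sub_left]

lemma ip_sub_right {h : E → ℝ} (hf : MemLp f 2 μ) (hg : MemLp g 2 μ) (hh : MemLp h 2 μ) :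
    ip μ h (fun x => f x - g x) = ip μ h f - ip μ h g := by
  rw [ip_comm, ip_sub_left hf hg hh, ip_comm f, ip_comm g]

lemma ip_sub_self (hf : MemLp f 2 μ) (hg : MemLp g 2 μ) :
    ip μ (fun x => f x - g x) (fun x => f x - g x) = ip μ f f - 2 * ip μ f g + ip μ g g := by
  rw [ip_sub_left hf hg (memLp_sub hf hg), ip_sub_right hf hg hf, ip_sub_right hf hg hg,
    ip_comm g f]
  ring

lemma abs_ip_le (hf : MemLp f 2 μ) (hg : MemLp g 2 μ) :
    |ip μ f g| ≤ ‖toL2 μ f‖ * ‖toL2 μ g‖ := by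
  rw [ip_eq_inner hf hg]
  exact abs_real_inner_le_norm _ _

end L2

lemma tendsto_of_forall_approx {u : ℕ → ℝ} {a : ℝ}
    (h : ∀ ε > 0, ∃ v : ℕ → ℝ, ∃ b, Tendsto v atTop (𝓝 b) ∧
      (∀ᶠ n in atTop, |u n - v n| ≤ ε) ∧ |a - b| ≤ ε) :
    Tendsto u atTop (𝓝 a) := by
  refine Metric.tendsto_atTop.2 fun ε hε => ?_
  obtain ⟨v, b, hv, huv, hab⟩ := h (ε / 4) (by positivity)
  obtain ⟨N, hN⟩ := eventually_atTop.1
    (huv.and (Metric.tendsto_atTop.1 hv (ε / 4) (by positivity) |> eventually_atTop.2))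
  refine ⟨N, fun n hn => ?_⟩
  obtain ⟨h1, h2⟩ := hN n hn
  rw [Real.dist_eq] at h2 ⊢
  calc |u n - a| ≤ |u n - v n| + |v n - b| + |b - a| := by
        linarith [abs_sub_le (u n) (v n) b, abs_sub_le (u n) b a]
    _ < ε := by rw [abs_sub_comm b a]; linarith

lemma le_of_tendsto_subseq_of_limsup_le {u : ℕ → ℝ} {σ : ℕ → ℕ} {L c : ℝ}
    (hσ : Tendsto σ atTop atTop) (hu : Tendsto (u ∘ σ) atTop (𝓝 L)) (hbdd : BddAbove (Set.range u))
    (hlim : limsup u atTop ≤ c) : L ≤ c := by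
  refine le_of_forall_pos_le_add fun ε hε => ?_
  have hev : ∀ᶠ n in atTop, u n < c + ε := eventually_lt_of_limsup_lt (by linarith)
    hbdd.isBoundedUnder_of_range
  exact le_of_tendsto hu ((hσ.eventually hev).mono fun k hk => hk.le)

lemma eq_zero_of_forall_le_mul {c L : ℝ} (h : ∀ t : ℝ, c ≤ t * L) : L = 0 := by
  by_contra hL
  have := h ((c - 1) / L)
  rw [div_mul_cancel₀ _ hL] at this
  linarith

lemma norm_le_of_forall_mem_dense {X : Type*} [NormedAddCommGroup X] [InnerProductSpace ℝ X]
    {D : Set X} (hD : Dense D) {x : X} {c : ℝ} (hc : 0 ≤ c)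
    (h : ∀ y ∈ D, |⟪x, y⟫| ≤ c * ‖y‖) : ‖x‖ ≤ c := by
  have hclosed : IsClosed {y : X | |⟪x, y⟫| ≤ c * ‖y‖} :=
    isClosed_le (continuous_const.inner continuous_id).abs (continuous_const.mul continuous_norm)
  have hx : |⟪x, x⟫| ≤ c * ‖x‖ := hclosed.closure_subset_iff.2 h (hD x)
  rw [real_inner_self_eq_norm_sq, abs_of_nonneg (sq_nonneg _), sq] at hx
  rcases (norm_nonneg x).eq_or_lt with h0 | h0
  · rw [← h0]; exact hc
  · exact le_of_mul_le_mul_right hx h0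

lemma frequently_lt_and_partialSups_eq {α : Type*} [LinearOrder α] {ρ : ℕ → α}
    (hρ : ¬BddAbove (Set.range ρ)) (y : α) : ∃ᶠ n in atTop, y < ρ n ∧ partialSups ρ n = ρ n := by
  refine frequently_atTop.2 fun N => ?_
  have hex : ∃ n, max (partialSups ρ N) y < ρ n := by
    obtain ⟨_, ⟨n, rfl⟩, hn⟩ := not_bddAbove_iff.1 hρ (max (partialSups ρ N) y)
    exact ⟨n, hn⟩
  have hfirst : ∀ j < Nat.find hex, ρ j ≤ max (partialSups ρ N) y := fun j hj =>
    not_lt.1 (Nat.find_min hex hj)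
  obtain ⟨hN, hy⟩ := max_lt_iff.1 (Nat.find_spec hex)
  refine ⟨Nat.find hex, ?_, hy, ?_⟩
  · by_contra! hlt
    exact (le_partialSups_of_le ρ hlt.le).not_gt hN
  · refine le_antisymm (partialSups_le _ _ _ fun j hj => ?_) (le_partialSups ρ _)
    rcases hj.lt_or_eq with hj | rfl
    exacts [(hfirst j hj).trans (Nat.find_spec hex).le, le_rfl]

lemma exists_coeff_of_not_bddAbove {ρ : ℕ → ℝ} (hρ0 : ∀ n, 0 ≤ ρ n)
    (hρ : ¬BddAbove (Set.range ρ)) :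
    ∃ c : ℕ → ℝ, c 0 = 0 ∧ (∀ n, 0 ≤ c n) ∧ Tendsto (fun n => c n * √(ρ n)) atTop (𝓝 0) ∧
      ∃ᶠ n in atTop, 1 ≤ c n * ρ n := by
  set M := partialSups ρ
  have hM : Tendsto M atTop atTop := by
    refine (partialSups_monotone ρ).tendsto_atTop_atTop fun b => ?_
    obtain ⟨_, ⟨n, rfl⟩, hn⟩ := not_bddAbove_iff.1 hρ b
    exact ⟨n, hn.le.trans (le_partialSups ρ n)⟩
  have hM0 : ∀ n, 0 ≤ M n := fun n => (hρ0 n).trans (le_partialSups ρ n)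
  -- `c n * √(ρ n) ≤ M n ^ (-1/4)` always, and `c n * ρ n = M n ^ (1/4)` where `ρ` attains `M`
  refine ⟨fun n => if n = 0 then 0 else M n ^ (-(3 / 4 : ℝ)), if_pos rfl, fun n => ?_, ?_, ?_⟩
  · dsimp only
    split_ifs
    exacts [le_rfl, Real.rpow_nonneg (hM0 n) _]
  · refine squeeze_zero' (Eventually.of_forall fun n => ?_) ?_
      ((tendsto_rpow_neg_atTop (by norm_num : (0 : ℝ) < 1 / 4)).comp hM)
    · dsimp only
      split_ifs
      exacts [by simp, mul_nonneg (Real.rpow_nonneg (hM0 n) _) (Real.sqrt_nonneg _)]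
    · filter_upwards [eventually_ne_atTop 0, hM.eventually_gt_atTop 0] with n hn hMn
      rw [if_neg hn, Function.comp_apply]
      calc M n ^ (-(3 / 4 : ℝ)) * √(ρ n) ≤ M n ^ (-(3 / 4 : ℝ)) * M n ^ (1 / 2 : ℝ) := by
            rw [← Real.sqrt_eq_rpow]
            gcongr
            exact le_partialSups ρ n
        _ = M n ^ (-(1 / 4 : ℝ)) := by rw [← Real.rpow_add hMn]; norm_num
  · refine ((frequently_lt_and_partialSups_eq hρ 1).and_eventually (eventually_ne_atTop 0)).mono
      fun n ⟨⟨h1, hrec⟩, hn⟩ => ?_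
    dsimp only
    rw [if_neg hn, ← hrec, ← Real.rpow_add_one (by linarith)]
    exact Real.one_le_rpow (hrec ▸ h1.le) (by norm_num)

namespace Semigroup2

variable {μ : Measure E}

section Generator

variable (sg : Semigroup2 μ) {F G : Lp ℝ 2 μ}

lemma tendsto_gen (hF : sg.memDom F) :
    Tendsto (fun t : ℝ => t⁻¹ • (sg.T t F - F)) (𝓝[>] 0) (𝓝 (sg.gen F)) := by
  rw [gen, dif_pos hF]
  exact hF.choose_spec

lemma gen_eq_of_tendsto {A : Lp ℝ 2 μ}
    (h : Tendsto (fun t : ℝ => t⁻¹ • (sg.T t F - F)) (𝓝[>] 0) (𝓝 A)) : sg.gen F = A :=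
  tendsto_nhds_unique (sg.tendsto_gen ⟨A, h⟩) h

lemma tendsto_sub_gen (hF : sg.memDom F) (hG : sg.memDom G) :
    Tendsto (fun t : ℝ => t⁻¹ • (sg.T t (F - G) - (F - G))) (𝓝[>] 0)
      (𝓝 (sg.gen F - sg.gen G)) := by
  refine ((sg.tendsto_gen hF).sub (sg.tendsto_gen hG)).congr fun t => ?_
  rw [← smul_sub, map_sub]
  abel_nf

lemma memDom_sub (hF : sg.memDom F) (hG : sg.memDom G) : sg.memDom (F - G) :=
  ⟨_, sg.tendsto_sub_gen hF hG⟩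

lemma gen_sub (hF : sg.memDom F) (hG : sg.memDom G) :
    sg.gen (F - G) = sg.gen F - sg.gen G :=
  sg.gen_eq_of_tendsto (sg.tendsto_sub_gen hF hG)

lemma res_smul (β c : ℝ) (F : Lp ℝ 2 μ) : sg.res β (c • F) = c • sg.res β F := by
  rw [res, res, ← integral_smul]
  simp only [map_smul, smul_comm c]

end Generator

section Forms

variable (sg : Semigroup2 μ) {f g : E → ℝ}

lemma memLp_Af (f : E → ℝ) : MemLp (sg.Af f) 2 μ := Lp.memLp _

lemma toL2_Af (f : E → ℝ) : toL2 μ (sg.Af f) = sg.gen (toL2 μ f) := toL2_coeFn _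

lemma S_eq_inner (f : E → ℝ) (hg : MemLp g 2 μ) :
    sg.S f g = -⟪sg.gen (toL2 μ f), toL2 μ g⟫ := by
  rw [S, ip_neg_left, ip_eq_inner (sg.memLp_Af f) hg, toL2_Af]

lemma abs_S_le (f : E → ℝ) (hg : MemLp g 2 μ) :
    |sg.S f g| ≤ ‖sg.gen (toL2 μ f)‖ * ‖toL2 μ g‖ := by
  rw [S_eq_inner sg f hg, abs_neg]
  exact abs_real_inner_le_norm _ _

lemma Sb_eq_inner (hf : MemLp f 2 μ) (hg : MemLp g 2 μ) (β : ℝ) :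
    sg.Sb β f g = ⟪β • toL2 μ f - sg.gen (toL2 μ f), toL2 μ g⟫ := by
  rw [Sb, S_eq_inner sg f hg, ip_eq_inner hf hg, inner_sub_left, real_inner_smul_left]
  ring

lemma Sb_eq_ip (hf : MemLp f 2 μ) (hg : MemLp g 2 μ) (β : ℝ) :
    sg.Sb β f g = ip μ (fun x => β * f x - sg.Af f x) g := by
  rw [ip_sub_left (hf.const_mul β) (sg.memLp_Af f) hg, ip_const_mul_left, Sb, S, ip_neg_left]
  ring

lemma Sb_congr_ae_right {g' : E → ℝ} (β : ℝ) (f : E → ℝ) (h : g =ᵐ[μ] g') :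
    sg.Sb β f g = sg.Sb β f g' := by
  simp only [Sb, S, ip_congr_ae EventuallyEq.rfl h]

lemma norm_gen_toL2_le {M : ℝ} (h : ip μ (sg.Af f) (sg.Af f) ≤ M) :
    ‖sg.gen (toL2 μ f)‖ ≤ √M :=
  sg.toL2_Af f ▸ norm_toL2_le_sqrt (sg.memLp_Af f) h

lemma norm_smul_sub_gen_le (hf : MemLp f 2 μ) {β K M : ℝ} (hβ : 0 ≤ β) (hK : ip μ f f ≤ K)
    (hM : ip μ (sg.Af f) (sg.Af f) ≤ M) :
    ‖β • toL2 μ f - sg.gen (toL2 μ f)‖ ≤ β * √K + √M := by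
  refine (norm_sub_le _ _).trans (add_le_add ?_ (sg.norm_gen_toL2_le hM))
  rw [norm_smul, Real.norm_of_nonneg hβ]
  exact mul_le_mul_of_nonneg_left (norm_toL2_le_sqrt hf hK) hβ

lemma ip_smul_sub_Af_le (hf : MemLp f 2 μ) {β K M : ℝ} (hβ : 0 ≤ β) (hK : ip μ f f ≤ K)
    (hM : ip μ (sg.Af f) (sg.Af f) ≤ M) :
    ip μ (fun x => β * f x - sg.Af f x) (fun x => β * f x - sg.Af f x) ≤ (β * √K + √M) ^ 2 := by
  rw [ip_self_eq_norm_sq (memLp_sub (hf.const_mul β) (sg.memLp_Af f)),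
    toL2_sub (hf.const_mul β) (sg.memLp_Af f), toL2_const_mul hf, toL2_Af]
  exact pow_le_pow_left₀ (norm_nonneg _) (sg.norm_smul_sub_gen_le hf hβ hK hM) 2

lemma abs_Sb_self_le (hf : MemLp f 2 μ) {β K M : ℝ} (hβ : 0 ≤ β) (hK : ip μ f f ≤ K)
    (hM : ip μ (sg.Af f) (sg.Af f) ≤ M) : |sg.Sb β f f| ≤ (β * √K + √M) * √K := by
  rw [sg.Sb_eq_inner hf hf]
  exact (abs_real_inner_le_norm _ _).trans (mul_le_mul (sg.norm_smul_sub_gen_le hf hβ hK hM)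
    (norm_toL2_le_sqrt hf hK) (norm_nonneg _) (by positivity))

lemma memD_sub (hf : MemLp f 2 μ) (hg : MemLp g 2 μ) (hfD : sg.memD f) (hgD : sg.memD g) :
    sg.memD (fun x => f x - g x) := by
  rw [memD, toL2_sub hf hg]
  exact sg.memDom_sub hfD hgD

lemma Sb_sub_self (hf : MemLp f 2 μ) (hg : MemLp g 2 μ) (hfD : sg.memD f) (hgD : sg.memD g)
    (β : ℝ) : sg.Sb β (fun x => f x - g x) (fun x => f x - g x) =
      sg.Sb β f f - sg.Sb β f g - sg.Sb β g f + sg.Sb β g g := by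
  simp only [Sb_eq_inner sg (memLp_sub hf hg) (memLp_sub hf hg), Sb_eq_inner sg hf hg,
    Sb_eq_inner sg hf hf, Sb_eq_inner sg hg hf, Sb_eq_inner sg hg hg, toL2_sub hf hg,
    sg.gen_sub hfD hgD, inner_sub_left, inner_sub_right, inner_smul_left]
  ring

end Forms

namespace IsContraction

variable {sg : Semigroup2 μ} {F : Lp ℝ 2 μ} {β : ℝ}

lemma norm_T_le (hc : sg.IsContraction) {t : ℝ} (ht : 0 ≤ t) (F : Lp ℝ 2 μ) :
    ‖sg.T t F‖ ≤ ‖F‖ := by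
  simpa using (sg.T t).le_of_opNorm_le (hc t ht) F

lemma inner_gen_self_nonpos (hc : sg.IsContraction) (hF : sg.memDom F) :
    ⟪sg.gen F, F⟫ ≤ 0 := by
  refine le_of_tendsto ((sg.tendsto_gen hF).inner tendsto_const_nhds) ?_
  filter_upwards [self_mem_nhdsWithin] with t (ht : 0 < t)
  rw [real_inner_smul_left, inner_sub_left, real_inner_self_eq_norm_mul_norm]
  have hTF : ⟪sg.T t F, F⟫ ≤ ‖F‖ * ‖F‖ :=
    (real_inner_le_norm _ _).trans (by gcongr; exact hc.norm_T_le ht.le F)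
  exact mul_nonpos_of_nonneg_of_nonpos (inv_pos.2 ht).le (by linarith)

/-- By dissipativity, `β ‖F‖² ≤ ⟪(β - A) F, F⟫`. -/
lemma eq_zero_of_inner_sub_gen_nonpos (hc : sg.IsContraction) (hβ : 0 < β) (hF : sg.memDom F)
    (h : ⟪β • F - sg.gen F, F⟫ ≤ 0) : F = 0 := by
  rw [inner_sub_left, real_inner_smul_left, real_inner_self_eq_norm_sq] at h
  have := hc.inner_gen_self_nonpos hF
  have : ‖F‖ ^ 2 ≤ 0 := by nlinarith
  exact norm_eq_zero.1 (by nlinarith [norm_nonneg F])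

lemma norm_T_sub_T_le (hc : sg.IsContraction) {s s' : ℝ} (hs : 0 ≤ s)
    (hs' : 0 ≤ s') (F : Lp ℝ 2 μ) : ‖sg.T s' F - sg.T s F‖ ≤ ‖sg.T |s' - s| F - F‖ := by
  wlog hss' : s ≤ s' generalizing s s'
  · rw [norm_sub_rev, abs_sub_comm]
    exact this hs' hs (le_of_not_ge hss')
  have hsplit : sg.T s' F = sg.T s (sg.T (s' - s) F) := by
    rw [← ContinuousLinearMap.comp_apply, ← sg.T_add s (s' - s) hs (by linarith), add_sub_cancel]
  rw [hsplit, abs_of_nonneg (by linarith), ← map_sub]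
  exact hc.norm_T_le hs _

lemma continuousOn_T (hc : sg.IsContraction) (F : Lp ℝ 2 μ) :
    ContinuousOn (fun t => sg.T t F) (Set.Ici 0) := by
  intro s hs
  rw [ContinuousWithinAt, tendsto_iff_norm_sub_tendsto_zero]
  have habs : Tendsto (fun s' => |s' - s|) (𝓝 s) (𝓝 0) := by
    simpa using ((continuous_id.sub continuous_const).abs.tendsto s :
      Tendsto (fun s' : ℝ => |s' - s|) _ _)
  have hdist : Tendsto (fun s' => |s' - s|) (𝓝[Set.Ici 0] s) (𝓝[≥] 0) :=
    tendsto_nhdsWithin_iff.2 ⟨habs.mono_left nhdsWithin_le_nhds,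
      Eventually.of_forall fun _ => Set.mem_Ici.2 (abs_nonneg _)⟩
  refine squeeze_zero' (Eventually.of_forall fun _ => norm_nonneg _)
    (eventually_nhdsWithin_of_forall fun s' hs' => hc.norm_T_sub_T_le hs hs' F) ?_
  simpa using (tendsto_iff_norm_sub_tendsto_zero.1 ((sg.strongCont F).comp hdist))

lemma continuousOn_integrand_res (hc : sg.IsContraction) (F : Lp ℝ 2 μ) :
    ContinuousOn (fun t => Real.exp (-β * t) • sg.T t F) (Set.Ici 0) :=
  (Real.continuous_exp.comp (continuous_const.mul continuous_id)).continuousOn.smul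
    (hc.continuousOn_T F)

lemma norm_integrand_res_le (hc : sg.IsContraction) {t : ℝ} (ht : 0 ≤ t) (F : Lp ℝ 2 μ) :
    ‖Real.exp (-β * t) • sg.T t F‖ ≤ Real.exp (-β * t) * ‖F‖ := by
  rw [norm_smul, Real.norm_of_nonneg (Real.exp_pos _).le]
  exact mul_le_mul_of_nonneg_left (hc.norm_T_le ht F) (Real.exp_pos _).le

lemma integrableOn_integrand_res (hc : sg.IsContraction) (hβ : 0 < β) (F : Lp ℝ 2 μ) :
    IntegrableOn (fun t => Real.exp (-β * t) • sg.T t F) (Set.Ioi 0) := by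
  refine ((exp_neg_integrableOn_Ioi 0 hβ).mul_const ‖F‖).mono'
    ((hc.continuousOn_integrand_res F).mono Set.Ioi_subset_Ici_self |>.aestronglyMeasurable
      measurableSet_Ioi) ((ae_restrict_iff' measurableSet_Ioi).2 (Eventually.of_forall
        fun t ht => hc.norm_integrand_res_le (le_of_lt ht) F))

lemma norm_res_le (hc : sg.IsContraction) (hβ : 0 < β) (F : Lp ℝ 2 μ) :
    ‖sg.res β F‖ ≤ β⁻¹ * ‖F‖ := by
  have hexp : ∫ t in Set.Ioi (0 : ℝ), Real.exp (-β * t) = β⁻¹ := by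
    rw [integral_exp_mul_Ioi (by linarith) 0]
    simp
  rw [res, ← hexp, ← integral_mul_const]
  refine (norm_integral_le_integral_norm _).trans (integral_mono_of_nonneg
    (Eventually.of_forall fun _ => norm_nonneg _)
    ((exp_neg_integrableOn_Ioi 0 hβ).mul_const ‖F‖)
    ((ae_restrict_iff' measurableSet_Ioi).2
      (Eventually.of_forall fun t ht => hc.norm_integrand_res_le (le_of_lt ht) F)))

lemma res_sub (hc : sg.IsContraction) (hβ : 0 < β) (F G : Lp ℝ 2 μ) :
    sg.res β (F - G) = sg.res β F - sg.res β G := by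
  rw [res, res, res, ← integral_sub (hc.integrableOn_integrand_res hβ F)
    (hc.integrableOn_integrand_res hβ G)]
  simp only [map_sub, smul_sub]

lemma continuous_res (hc : sg.IsContraction) (hβ : 0 < β) : Continuous (sg.res β) := by
  refine (LipschitzWith.of_dist_le_mul (K := ⟨β⁻¹, (inv_pos.2 hβ).le⟩) fun F G => ?_).continuous
  rw [dist_eq_norm, dist_eq_norm, ← hc.res_sub hβ]
  exact hc.norm_res_le hβ _

lemma T_res (hc : sg.IsContraction) (hβ : 0 < β) (F : Lp ℝ 2 μ) {h : ℝ} (hh : 0 ≤ h) :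
    sg.T h (sg.res β F) =
      Real.exp (β * h) • (sg.res β F - ∫ t in (0)..h, Real.exp (-β * t) • sg.T t F) := by
  set g := fun t => Real.exp (-β * t) • sg.T t F
  have hint := hc.integrableOn_integrand_res hβ F
  have htail : sg.res β F - ∫ t in (0)..h, g t = ∫ t in Set.Ioi h, g t := by
    rw [res, ← intervalIntegral.integral_interval_add_Ioi hint
      (hint.mono_set (Set.Ioi_subset_Ioi hh)), add_sub_cancel_left]
  have hshift : ∫ t in Set.Ioi h, g t = ∫ t in Set.Ioi 0, g (t + h) := by
    have hpre : (fun t : ℝ => t + h) ⁻¹' Set.Ioi h = Set.Ioi 0 := by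
      ext t
      simp
    rw [← (measurePreserving_add_right volume h).setIntegral_preimage_emb
      (measurableEmbedding_addRight h) g (Set.Ioi h), hpre]
  rw [htail, hshift, res, ← ContinuousLinearMap.integral_comp_comm _ hint, ← integral_smul]
  refine setIntegral_congr_fun measurableSet_Ioi fun t ht => ?_
  simp only [g, map_smul, smul_smul, ← Real.exp_add, add_comm t h,
    sg.T_add h t hh (le_of_lt ht), ContinuousLinearMap.comp_apply]
  ring_nf

/-- Differentiate the formula `T_res` at `0⁺`, by the fundamental theorem of calculus. -/
lemma tendsto_T_res (hc : sg.IsContraction) (hβ : 0 < β) (F : Lp ℝ 2 μ) :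
    Tendsto (fun h : ℝ => h⁻¹ • (sg.T h (sg.res β F) - sg.res β F)) (𝓝[>] 0)
      (𝓝 (β • sg.res β F - F)) := by
  set g := fun t => Real.exp (-β * t) • sg.T t F
  have hg := hc.continuousOn_integrand_res (β := β) F
  have hI : HasDerivWithinAt (fun h => ∫ t in (0)..h, g t) F (Set.Ici 0) 0 := by
    have := intervalIntegral.integral_hasDerivWithinAt_right (f := g) (a := 0) (b := 0)
      (s := Set.Ici 0) (t := Set.Ioi 0) IntervalIntegrable.refl
      ((hg.mono Set.Ioi_subset_Ici_self).stronglyMeasurableAtFilter_nhdsWithin measurableSet_Ioi 0)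
      ((hg 0 Set.self_mem_Ici).mono Set.Ioi_subset_Ici_self)
    simpa [g, sg.T_zero] using this
  have hexp : HasDerivWithinAt (fun h => Real.exp (β * h)) β (Set.Ici 0) 0 := by
    simpa using (((hasDerivAt_id (0 : ℝ)).const_mul β).exp).hasDerivWithinAt
  have hΦ := (hasDerivWithinAt_iff_tendsto_slope' (lt_irrefl (0 : ℝ))).1
    ((hexp.smul (hI.const_sub (sg.res β F))).mono Set.Ioi_subset_Ici_self)
  refine (hΦ.congr' ?_).trans (by simp [sub_eq_add_neg, add_comm])
  filter_upwards [self_mem_nhdsWithin] with h (hh : 0 < h)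
  rw [slope_def_module, hc.T_res hβ F hh.le]
  simp [g]

lemma memDom_res (hc : sg.IsContraction) (hβ : 0 < β) (F : Lp ℝ 2 μ) :
    sg.memDom (sg.res β F) :=
  ⟨_, hc.tendsto_T_res hβ F⟩

lemma gen_res (hc : sg.IsContraction) (hβ : 0 < β) (F : Lp ℝ 2 μ) :
    sg.gen (sg.res β F) = β • sg.res β F - F :=
  sg.gen_eq_of_tendsto (hc.tendsto_T_res hβ F)

lemma res_sub_gen (hc : sg.IsContraction) (hβ : 0 < β) {F : Lp ℝ 2 μ} (hF : sg.memDom F) :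
    sg.res β (β • F - sg.gen F) = F := by
  set D := sg.res β (β • F - sg.gen F) - F
  have hD : sg.memDom D := sg.memDom_sub (hc.memDom_res hβ _) hF
  have hgenD : sg.gen D = β • D := by
    rw [sg.gen_sub (hc.memDom_res hβ _) hF, hc.gen_res hβ, smul_sub]
    abel
  refine sub_eq_zero.1 (hc.eq_zero_of_inner_sub_gen_nonpos hβ hD ?_)
  rw [hgenD, sub_self, inner_zero_left]

lemma Sb_self_sub_le_of_Sb_sub_le (hc : sg.IsContraction) (hβ : 0 < β) (G : Lp ℝ 2 μ) {u w : E → ℝ}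
    (hu : MemLp u 2 μ) (hw : MemLp w 2 μ) (hu_dom : sg.memD u) (hw_dom : sg.memD w) {T : ℝ}
    (h : sg.Sb β (fun x => sg.res β G x - w x) (fun x => sg.res β G x - w x) ≤
      sg.Sb β (sg.res β G) (sg.res β G) - sg.Sb β (sg.res β G) u - sg.Sb β u (sg.res β G) + T) :
    sg.Sb β w w - T ≤ ⟪G, toL2 μ w - toL2 μ u⟫ +
      ⟪β • (toL2 μ w - toL2 μ u) - sg.gen (toL2 μ w - toL2 μ u), sg.res β G⟫ := by
  have hR : MemLp (sg.res β G) 2 μ := Lp.memLp _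
  have hR_dom : sg.memD (sg.res β G) := by
    rw [memD, toL2_coeFn]
    exact hc.memDom_res hβ G
  rw [sg.Sb_sub_self hR hw hR_dom hw_dom] at h
  simp only [sg.Sb_eq_inner hR hR, sg.Sb_eq_inner hR hw, sg.Sb_eq_inner hw hR,
    sg.Sb_eq_inner hR hu, sg.Sb_eq_inner hu hR, sg.Sb_eq_inner hw hw, toL2_coeFn,
    hc.gen_res hβ] at h
  rw [sg.Sb_eq_inner hw hw, sg.gen_sub hw_dom hu_dom]
  simp only [inner_sub_left, inner_sub_right, inner_smul_left, sub_sub_cancel] at h ⊢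
  simp only [RCLike.conj_to_real] at h ⊢
  linarith

lemma eq_zero_of_forall_le (hc : sg.IsContraction) (hβ : 0 < β) {D : Set (Lp ℝ 2 μ)}
    (hD : Dense D) (hD_smul : ∀ t : ℝ, ∀ G ∈ D, t • G ∈ D) {e : Lp ℝ 2 μ} (he : sg.memDom e)
    {c : ℝ} (h : ∀ G ∈ D, c ≤ ⟪G, e⟫ + ⟪β • e - sg.gen e, sg.res β G⟫) : e = 0 := by
  set Λ : Lp ℝ 2 μ → ℝ := fun G => ⟪G, e⟫ + ⟪β • e - sg.gen e, sg.res β G⟫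
  have hΛ_smul : ∀ (t : ℝ) G, Λ (t • G) = t * Λ G := fun t G => by
    simp only [Λ, res_smul, real_inner_smul_left, real_inner_smul_right]
    ring
  have hΛ_cont : Continuous Λ :=
    (continuous_id.inner continuous_const).add (continuous_const.inner (hc.continuous_res hβ))
  have hΛ : Λ = fun _ => 0 := hΛ_cont.ext_on hD continuous_const fun G hG =>
    eq_zero_of_forall_le_mul fun t => le_of_le_of_eq (h _ (hD_smul t G hG)) (hΛ_smul t G)
  have hΛe := congr_fun hΛ (β • e - sg.gen e)
  simp only [Λ, hc.res_sub_gen hβ he] at hΛe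
  exact hc.eq_zero_of_inner_sub_gen_nonpos hβ he (by linarith)

end IsContraction

end Semigroup2

namespace Frame

variable (fr : Frame E) {f g : E → ℝ}

lemma memLp_of_mem_C (hf : f ∈ fr.C) (n : ℕ) : MemLp f 2 (fr.ν n) := hf.1.2.1 n

lemma tendsto_ip_of_mem_F (hf : f ∈ fr.F) (hg : g ∈ fr.F) :
    Tendsto (fun n => ip (fr.ν n) f g) atTop (𝓝 (ip (fr.ν 0) f g)) := by
  have hfg : (fun x => f x - g x) ∈ fr.F := by
    simpa [sub_eq_add_neg] using fr.F_linear f hf g hg 1 (-1)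
  have hpolar : ∀ n, ip (fr.ν n) f g = (ip (fr.ν n) f f + ip (fr.ν n) g g
      - ip (fr.ν n) (fun x => f x - g x) (fun x => f x - g x)) / 2 := fun n => by
    rw [ip_sub_self (fr.F_memL2 f hf n) (fr.F_memL2 g hg n)]
    ring
  simp only [hpolar]
  exact (((fr.F_tendsto f hf).add (fr.F_tendsto g hg)).sub (fr.F_tendsto _ hfg)).div_const 2

lemma F_subset_C : fr.F ⊆ fr.C := fun f hf =>
  ⟨⟨fr.F_measurable f hf, fr.F_memL2 f hf, fr.F_tendsto f hf⟩,
    fun _ _ => ⟨f, hf, EventuallyEq.rfl⟩, fun _ hg => fr.tendsto_ip_of_mem_F hf hg⟩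

lemma tendsto_ip_of_mem_C (hf : f ∈ fr.C) (hg : g ∈ fr.C) :
    Tendsto (fun n => ip (fr.ν n) f g) atTop (𝓝 (ip (fr.ν 0) f g)) := by
  have hfL2 := fr.memLp_of_mem_C hf
  have hgL2 := fr.memLp_of_mem_C hg
  obtain ⟨A, hA⟩ := hf.1.2.2.bddAbove_range
  have hfA : ∀ n, ‖toL2 (fr.ν n) f‖ ≤ √A := fun n =>
    norm_toL2_le_sqrt (hfL2 n) (hA (Set.mem_range_self n))
  refine tendsto_of_forall_approx fun ε hε => ?_
  set δ := ε / (√A + 1)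
  have hδ : 0 < δ := by positivity
  obtain ⟨φ, hφ, hgφ⟩ := fr.F_dense g hg.1.1 (hgL2 0) (δ ^ 2) (by positivity)
  have hφL2 := fr.F_memL2 φ hφ
  -- `|⟨f, g⟩ - ⟨f, φ⟩| ≤ ‖f‖ ‖g - φ‖ ≤ √A δ ≤ ε` wherever `‖g - φ‖ ≤ δ`
  have happrox : ∀ n, ip (fr.ν n) (fun x => g x - φ x) (fun x => g x - φ x) ≤ δ ^ 2 →
      |ip (fr.ν n) f g - ip (fr.ν n) f φ| ≤ ε := fun n hn => by
    rw [← ip_sub_right (hgL2 n) (hφL2 n) (hfL2 n)]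
    refine (abs_ip_le (hfL2 n) (memLp_sub (hgL2 n) (hφL2 n))).trans ?_
    have hgφn := norm_toL2_le_sqrt (memLp_sub (hgL2 n) (hφL2 n)) hn
    rw [Real.sqrt_sq hδ.le] at hgφn
    calc _ ≤ √A * δ := mul_le_mul (hfA n) hgφn (norm_nonneg _) (Real.sqrt_nonneg _)
      _ ≤ ε := by
        rw [mul_div_assoc', div_le_iff₀ (by positivity)]
        nlinarith [Real.sqrt_nonneg A]
  have hnorm : Tendsto (fun n => ip (fr.ν n) (fun x => g x - φ x) (fun x => g x - φ x)) atTop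
      (𝓝 (ip (fr.ν 0) (fun x => g x - φ x) (fun x => g x - φ x))) := by
    simp only [fun n => ip_sub_self (hgL2 n) (hφL2 n)]
    exact (hg.1.2.2.sub ((hg.2.2 φ hφ).const_mul 2)).add (fr.F_tendsto φ hφ)
  refine ⟨fun n => ip (fr.ν n) f φ, ip (fr.ν 0) f φ, hf.2.2 φ hφ,
    (hnorm.eventually_lt_const hgφ).mono fun n hn => happrox n hn.le, happrox 0 hgφ.le⟩

lemma sub_mem_C (hf : f ∈ fr.C) (hg : g ∈ fr.C) : (fun x => f x - g x) ∈ fr.C := by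
  have hfL2 := fr.memLp_of_mem_C hf
  have hgL2 := fr.memLp_of_mem_C hg
  refine ⟨⟨hf.1.1.sub hg.1.1, fun n => memLp_sub (hfL2 n) (hgL2 n), ?_⟩, fun n hn => ?_,
    fun ψ hψ => ?_⟩
  · simp only [fun n => ip_sub_self (hfL2 n) (hgL2 n)]
    exact (hf.1.2.2.sub ((fr.tendsto_ip_of_mem_C hf hg).const_mul 2)).add hg.1.2.2
  · obtain ⟨f', hf', hff'⟩ := hf.2.1 n hn
    obtain ⟨g', hg', hgg'⟩ := hg.2.1 n hn
    refine ⟨_, fr.F_linear f' hf' g' hg' 1 (-1), ?_⟩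
    filter_upwards [hff', hgg'] with x hfx hgx
    rw [hfx, hgx]
    ring
  · simp only [fun n => ip_sub_left (hfL2 n) (hgL2 n) (fr.F_memL2 ψ hψ n)]
    exact (hf.2.2 ψ hψ).sub (hg.2.2 ψ hψ)

lemma const_mul_mem_C (c : ℝ) (hf : f ∈ fr.C) : (fun x => c * f x) ∈ fr.C := by
  refine ⟨⟨measurable_const.mul hf.1.1, fun n => (fr.memLp_of_mem_C hf n).const_mul c, ?_⟩,
    fun n hn => ?_, fun ψ hψ => ?_⟩
  · simp only [ip_const_mul_left, ip_const_mul_right]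
    exact (hf.1.2.2.const_mul c).const_mul c
  · obtain ⟨f', hf', hff'⟩ := hf.2.1 n hn
    refine ⟨_, fr.F_linear f' hf' f' hf' c 0, ?_⟩
    filter_upwards [hff'] with x hfx
    rw [hfx]
    ring
  · simp only [ip_const_mul_left]
    exact (hf.2.2 ψ hψ).const_mul c

lemma dense_toL2_F : Dense (toL2 (fr.ν 0) '' fr.F) := by
  refine Metric.dense_iff.2 fun X r hr => ?_
  obtain ⟨φ, hφ, hXφ⟩ := fr.F_dense X (Lp.stronglyMeasurable X).measurable (Lp.memLp X)
    (r ^ 2) (by positivity)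
  refine ⟨toL2 (fr.ν 0) φ, ?_, φ, hφ, rfl⟩
  rw [ip_self_eq_norm_sq (memLp_sub (Lp.memLp X) (fr.F_memL2 φ hφ 0)),
    toL2_sub (Lp.memLp X) (fr.F_memL2 φ hφ 0), toL2_coeFn] at hXφ
  rw [Metric.mem_ball, dist_comm, dist_eq_norm]
  exact (pow_lt_pow_iff_left₀ (norm_nonneg _) hr.le two_ne_zero).1 hXφ

lemma dense_toL2_C : Dense (toL2 (fr.ν 0) '' fr.C) :=
  fr.dense_toL2_F.mono (Set.image_mono fr.F_subset_C)

lemma smul_mem_toL2_C (t : ℝ) {G : Lp ℝ 2 (fr.ν 0)} (hG : G ∈ toL2 (fr.ν 0) '' fr.C) :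
    t • G ∈ toL2 (fr.ν 0) '' fr.C := by
  obtain ⟨g, hg, rfl⟩ := hG
  exact ⟨_, fr.const_mul_mem_C t hg, toL2_const_mul (fr.memLp_of_mem_C hg 0) t⟩

lemma wConv_congr_ae {φs : ℕ → E → ℝ} {φ φ' : E → ℝ} (h : φ =ᵐ[fr.ν 0] φ') :
    fr.WConv φs φ ↔ fr.WConv φs φ' := by
  simp only [WConv, ip_congr_ae h EventuallyEq.rfl]

lemma sConv_congr_ae {φs : ℕ → E → ℝ} {φ φ' : E → ℝ} (h : φ =ᵐ[fr.ν 0] φ') :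
    fr.SConv φs φ ↔ fr.SConv φs φ' := by
  simp only [SConv, fr.wConv_congr_ae h, ip_congr_ae h h]

variable {fr}

lemma WConv.sub {φs ψs : ℕ → E → ℝ} {φ ψ : E → ℝ} (hφs : ∀ n, MemLp (φs n) 2 (fr.ν n))
    (hψs : ∀ n, MemLp (ψs n) 2 (fr.ν n)) (hφ : MemLp φ 2 (fr.ν 0)) (hψ : MemLp ψ 2 (fr.ν 0))
    (h₁ : fr.WConv φs φ) (h₂ : fr.WConv ψs ψ) :
    fr.WConv (fun n x => φs n x - ψs n x) (fun x => φ x - ψ x) := fun χ hχ => by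
  simp only [fun n => ip_sub_left (hφs n) (hψs n) (fr.memLp_of_mem_C hχ n),
    ip_sub_left hφ hψ (fr.memLp_of_mem_C hχ 0)]
  exact (h₁ χ hχ).sub (h₂ χ hχ)

lemma SConv.tendsto_ip_sub_self {ψs : ℕ → E → ℝ} {ψ : E → ℝ} (h : fr.SConv ψs ψ)
    (hψs : ∀ n, MemLp (ψs n) 2 (fr.ν n)) (hψ : ψ ∈ fr.C) :
    Tendsto (fun n => ip (fr.ν n) (fun x => ψs n x - ψ x) (fun x => ψs n x - ψ x)) atTop
      (𝓝 0) := by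
  simp only [fun n => ip_sub_self (hψs n) (fr.memLp_of_mem_C hψ n)]
  convert (h.2.sub ((h.1 ψ hψ).const_mul 2)).add hψ.1.2.2 using 2
  ring

lemma SConv.tendsto_ip {ψs vs : ℕ → E → ℝ} {ψ v : E → ℝ} {B : ℝ} (h : fr.SConv ψs ψ)
    (hψs : ∀ n, MemLp (ψs n) 2 (fr.ν n)) (hψ : ψ ∈ fr.C)
    (hvs : ∀ n, MemLp (vs n) 2 (fr.ν n)) (hB : ∀ n, ip (fr.ν n) (vs n) (vs n) ≤ B)
    (hv : Tendsto (fun n => ip (fr.ν n) (vs n) ψ) atTop (𝓝 (ip (fr.ν 0) v ψ))) :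
    Tendsto (fun n => ip (fr.ν n) (vs n) (ψs n)) atTop (𝓝 (ip (fr.ν 0) v ψ)) := by
  have hψL2 := fr.memLp_of_mem_C hψ
  have hsmall : Tendsto (fun n => ip (fr.ν n) (vs n) (fun x => ψs n x - ψ x)) atTop (𝓝 0) := by
    refine squeeze_zero_norm (fun n => (abs_ip_le (hvs n) (memLp_sub (hψs n) (hψL2 n))).trans
      (mul_le_mul_of_nonneg_right (norm_toL2_le_sqrt (hvs n) (hB n)) (norm_nonneg _))) ?_
    simp only [fun n => norm_toL2_eq_sqrt (memLp_sub (hψs n) (hψL2 n))]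
    simpa using ((h.tendsto_ip_sub_self hψs hψ).sqrt).const_mul √B
  simpa [fun n => ip_sub_right (hψs n) (hψL2 n) (hvs n)] using hv.add hsmall

lemma ip_self_le_of_tendsto {σ : ℕ → ℕ} (hσ : Tendsto σ atTop atTop) {xs : ℕ → E → ℝ}
    {x : E → ℝ} {Q : ℝ} (hxs : ∀ k, MemLp (xs k) 2 (fr.ν (σ k))) (hx : MemLp x 2 (fr.ν 0))
    (hpair : ∀ φ ∈ fr.F, Tendsto (fun k => ip (fr.ν (σ k)) (xs k) φ) atTop (𝓝 (ip (fr.ν 0) x φ)))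
    (hnorm : Tendsto (fun k => ip (fr.ν (σ k)) (xs k) (xs k)) atTop (𝓝 Q)) :
    ip (fr.ν 0) x x ≤ Q := by
  have hQ : 0 ≤ Q := ge_of_tendsto' hnorm fun k => ip_self_nonneg _
  have hbound : ∀ Φ ∈ toL2 (fr.ν 0) '' fr.F, |⟪toL2 (fr.ν 0) x, Φ⟫| ≤ √Q * ‖Φ‖ := by
    rintro _ ⟨φ, hφ, rfl⟩
    rw [← ip_eq_inner hx (fr.F_memL2 φ hφ 0), norm_toL2_eq_sqrt (fr.F_memL2 φ hφ 0)]
    refine le_of_tendsto_of_tendsto' (hpair φ hφ).abs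
      (hnorm.sqrt.mul ((fr.F_tendsto φ hφ).comp hσ).sqrt) fun k => ?_
    rw [Function.comp_apply, ← norm_toL2_eq_sqrt (hxs k), ← norm_toL2_eq_sqrt (fr.F_memL2 φ hφ _)]
    exact abs_ip_le (hxs k) (fr.F_memL2 φ hφ _)
  have hx_le := norm_le_of_forall_mem_dense fr.dense_toL2_F (Real.sqrt_nonneg Q) hbound
  rw [ip_self_eq_norm_sq hx, ← Real.sq_sqrt hQ]
  gcongr

variable (fr) {fs : ℕ → E → ℝ}

def glue (fs : ℕ → E → ℝ) : E → ℝ := fun x => ∑' n, (fr.En n).indicator (fs n) x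

lemma glue_eq_of_mem {x : E} {n : ℕ} (hx : x ∈ fr.En n) : fr.glue fs x = fs n x := by
  rw [glue, tsum_eq_single n fun m hm =>
    Set.indicator_of_notMem (Set.disjoint_left.1 (fr.disjEn n m hm.symm) hx) _]
  exact Set.indicator_of_mem hx _

lemma glue_ae_eq (n : ℕ) : fr.glue fs =ᵐ[fr.ν n] fs n := by
  have h : ∀ᵐ x ∂(fr.ν n), x ∈ fr.En n := mem_ae_iff.2 (fr.nullEn n)
  exact h.mono fun _ hx => fr.glue_eq_of_mem hx

lemma measurable_glue (h : ∀ n, Measurable (fs n)) : Measurable (fr.glue fs) := by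
  refine measurable_of_tendsto_metrizable' atTop (fun N => Finset.measurable_sum
    (Finset.range N) fun n _ => (h n).indicator (fr.measEn n)) (tendsto_pi_nhds.2 fun x => ?_)
  by_cases hx : ∃ n, x ∈ fr.En n
  · obtain ⟨n, hn⟩ := hx
    exact (hasSum_single n fun m hm => Set.indicator_of_notMem
      (Set.disjoint_left.1 (fr.disjEn n m hm.symm) hn) _).summable.hasSum.tendsto_sum_nat
  · push Not at hx
    simp only [Set.indicator_of_notMem (hx _), glue, tsum_zero, Finset.sum_const_zero]
    exact tendsto_const_nhds

lemma glue_mem_C (hmeas : ∀ n, Measurable (fs n)) (hL2 : ∀ n, MemLp (fs n) 2 (fr.ν n))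
    (hF : ∀ n, 1 ≤ n → ∃ g ∈ fr.F, fs n =ᵐ[fr.ν n] g)
    (hnorm : Tendsto (fun n => ip (fr.ν n) (fs n) (fs n)) atTop (𝓝 (ip (fr.ν 0) (fs 0) (fs 0))))
    (hpair : ∀ φ ∈ fr.F,
      Tendsto (fun n => ip (fr.ν n) (fs n) φ) atTop (𝓝 (ip (fr.ν 0) (fs 0) φ))) :
    fr.glue fs ∈ fr.C := by
  have hae := fr.glue_ae_eq (fs := fs)
  refine ⟨⟨fr.measurable_glue hmeas, fun n => (hL2 n).ae_eq (hae n).symm, ?_⟩,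
    fun n hn => (hF n hn).imp fun g ⟨hg, hfg⟩ => ⟨hg, (hae n).trans hfg⟩, fun φ hφ => ?_⟩
  · simpa only [fun n => ip_congr_ae (hae n) (hae n)] using hnorm
  · simpa only [fun n => ip_congr_ae (hae n) (EventuallyEq.refl _ φ)] using hpair φ hφ

/-- Otherwise, gluing suitably rescaled `us n` gives a test function in `𝓒` that vanishes
`ν 0`-a.e. but pairs with `us n` to at least `1` infinitely often. -/
lemma bddAbove_ip_self_of_wConv {us : ℕ → E → ℝ} {w : E → ℝ} (hus : ∀ n, us n ∈ fr.C)
    (hw : fr.WConv us w) : BddAbove (Set.range fun n => ip (fr.ν n) (us n) (us n)) := by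
  by_contra hunb
  obtain ⟨c, hc0, hc, hlim, hfreq⟩ :=
    exists_coeff_of_not_bddAbove (fun n => ip_self_nonneg (us n)) hunb
  have hL2 n := fr.memLp_of_mem_C (hus n) n
  have hψ : fr.glue (fun n x => c n * us n x) ∈ fr.C := by
    refine fr.glue_mem_C (fun n => measurable_const.mul (hus n).1.1)
      (fun n => (hL2 n).const_mul _) (fun n hn => ?_) ?_ fun φ hφ => ?_
    · obtain ⟨g, hg, hug⟩ := (hus n).2.1 n hn
      refine ⟨_, fr.F_linear g hg g hg (c n) 0, hug.mono fun x hx => ?_⟩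
      simp [hx]
    · simp only [ip_const_mul_left, ip_const_mul_right, hc0, zero_mul]
      convert hlim.pow 2 using 2 with n
      · rw [mul_pow, Real.sq_sqrt (ip_self_nonneg _)]
        ring
      · simp
    · obtain ⟨B, hB⟩ := (fr.F_tendsto φ hφ).bddAbove_range
      simp only [ip_const_mul_left, hc0, zero_mul, ip_zero_left]
      refine squeeze_zero_norm (fun n => ?_) (by simpa using hlim.mul_const √B)
      rw [Real.norm_eq_abs, abs_mul, abs_of_nonneg (hc n), mul_assoc]
      refine mul_le_mul_of_nonneg_left ((abs_ip_le (hL2 n) (fr.F_memL2 φ hφ n)).trans ?_) (hc n)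
      rw [norm_toL2_eq_sqrt (hL2 n)]
      exact mul_le_mul_of_nonneg_left (norm_toL2_le_sqrt (fr.F_memL2 φ hφ n)
        (hB (Set.mem_range_self n))) (Real.sqrt_nonneg _)
  have hpair := hw _ hψ
  simp only [fun n => ip_congr_ae (EventuallyEq.refl _ (us n))
    (fr.glue_ae_eq (fs := fun n x => c n * us n x) n),
    ip_congr_ae (EventuallyEq.refl _ w) (fr.glue_ae_eq 0), ip_const_mul_right, hc0, zero_mul,
    ip_zero_right] at hpair
  obtain ⟨n, h1, h2⟩ := (hfreq.and_eventually (hpair.eventually (gt_mem_nhds one_pos))).exists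
  linarith

end Frame

section Convergence

variable {fr : Frame E} {sg : ∀ n, Semigroup2 (fr.ν n)} {β : ℝ}

lemma tendsto_Sb_of_sConv {us : ℕ → E → ℝ} {u : E → ℝ}
    (hus : ∀ n, MemLp (us n) 2 (fr.ν n)) (hu : MemLp u 2 (fr.ν 0)) {B : ℝ}
    (hB : ∀ n, ip (fr.ν n) (fun x => β * us n x - (sg n).Af (us n) x)
      (fun x => β * us n x - (sg n).Af (us n) x) ≤ B)
    (hV : fr.WConv (fun n x => β * us n x - (sg n).Af (us n) x) (fun x => β * u x - (sg 0).Af u x))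
    {ψs : ℕ → E → ℝ} {ψ : E → ℝ} (hψs : ∀ n, ψs n ∈ fr.C) (hψ : ψ ∈ fr.C)
    (h : fr.SConv ψs ψ) :
    Tendsto (fun n => (sg n).Sb β (us n) (ψs n)) atTop (𝓝 ((sg 0).Sb β u ψ)) := by
  have hψs_L2 n := fr.memLp_of_mem_C (hψs n) n
  simp only [fun n => (sg n).Sb_eq_ip (hus n) (hψs_L2 n),
    (sg 0).Sb_eq_ip hu (fr.memLp_of_mem_C hψ 0)]
  exact h.tendsto_ip hψs_L2 hψ (fun n => memLp_sub ((hus n).const_mul β) ((sg n).memLp_Af _))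
    hB (hV ψ hψ)

/-- Pre-convergence (i) together with the weak lower semicontinuity of the norm. -/
lemma PreConv.exists_tendsto_Sb_ge (hpre : PreConv fr sg) (hβ : 0 ≤ β) {φs : ℕ → E → ℝ}
    {φ : E → ℝ} (hφ_meas : Measurable φ) (hφ_L2 : MemLp φ 2 (fr.ν 0))
    (hφs : ∀ n, φs n ∈ fr.C ∧ (sg n).memD (φs n)) (hw : fr.WConv φs φ) {C₁ C₂ : ℝ}
    (h₁ : ∀ n, ‖toL2 (fr.ν n) (φs n)‖ ≤ C₁) (h₂ : ∀ n, ‖(sg n).gen (toL2 (fr.ν n) (φs n))‖ ≤ C₂)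
    {σ₀ : ℕ → ℕ} (hσ₀ : StrictMono σ₀) :
    ∃ σ : ℕ → ℕ, ∃ L, StrictMono σ ∧
      Tendsto (fun k => (sg (σ₀ (σ k))).Sb β (φs (σ₀ (σ k))) (φs (σ₀ (σ k)))) atTop (𝓝 L) ∧
      (sg 0).Sb β φ φ ≤ L := by
  have hL2 n := fr.memLp_of_mem_C (hφs n).1 n
  have hC₂ : 0 ≤ C₂ := (norm_nonneg _).trans (h₂ 0)
  have hbdd : ∀ n, (sg n).S (φs n) (φs n) ∈ Set.Icc (-(C₂ * C₁)) (C₂ * C₁) ∧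
      ip (fr.ν n) (φs n) (φs n) ∈ Set.Icc (-C₁ ^ 2) (C₁ ^ 2) := fun n => by
    refine ⟨abs_le.1 (((sg n).abs_S_le _ (hL2 n)).trans
      (mul_le_mul (h₂ n) (h₁ n) (norm_nonneg _) hC₂)), abs_le.1 ?_⟩
    rw [abs_of_nonneg (ip_self_nonneg _), ip_self_eq_norm_sq (hL2 n)]
    exact pow_le_pow_left₀ (norm_nonneg _) (h₁ n) 2
  obtain ⟨⟨P, Q⟩, -, σ, hσ, hPQ⟩ := tendsto_subseq_of_bounded
    (x := fun k =>
      ((sg (σ₀ k)).S (φs (σ₀ k)) (φs (σ₀ k)), ip (fr.ν (σ₀ k)) (φs (σ₀ k)) (φs (σ₀ k))))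
    ((Metric.isBounded_Icc _ _).prod (Metric.isBounded_Icc _ _))
    fun k => Set.mk_mem_prod (hbdd (σ₀ k)).1 (hbdd (σ₀ k)).2
  have hτ := hσ₀.comp hσ
  have hP : Tendsto (fun k => (sg (σ₀ (σ k))).S (φs (σ₀ (σ k))) (φs (σ₀ (σ k)))) atTop (𝓝 P) :=
    (continuous_fst.tendsto _).comp hPQ
  have hQ : Tendsto (fun k => ip (fr.ν (σ₀ (σ k))) (φs (σ₀ (σ k))) (φs (σ₀ (σ k)))) atTop
      (𝓝 Q) :=
    (continuous_snd.tendsto _).comp hPQ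
  have hS := (hpre.1 φ hφ_meas hφ_L2 _ hτ (fun k => φs (σ₀ (σ k))) (fun k => hφs _)
    (fun ψ hψ => (hw ψ hψ).comp hτ.tendsto_atTop) ⟨C₂ ^ 2, fun k => ?_⟩).2
  · have hN := fr.ip_self_le_of_tendsto hτ.tendsto_atTop (fun k => hL2 _) hφ_L2
      (fun ψ hψ => (hw ψ (fr.F_subset_C hψ)).comp hτ.tendsto_atTop) hQ
    refine ⟨σ, β * Q + P, hσ, (hQ.const_mul β).add hP, ?_⟩
    rw [Semigroup2.Sb]
    gcongr
    exact hS.trans_eq hP.liminf_eq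
  · rw [ip_self_eq_norm_sq ((sg _).memLp_Af _), Semigroup2.toL2_Af]
    exact pow_le_pow_left₀ (norm_nonneg _) (h₂ _) 2

/-- Expand `S_{n,β}(ψ_n - u_n, ψ_n - u_n)` and pass to the limit along a subsequence of `σ₀`. -/
lemma Sb_sub_le_of_recovery (hpre : PreConv fr sg) (hβ : 0 ≤ β) {us : ℕ → E → ℝ} {w ψ : E → ℝ}
    (hus : ∀ n, us n ∈ fr.C ∧ (sg n).memD (us n)) (hw_meas : Measurable w)
    (hw_L2 : MemLp w 2 (fr.ν 0)) (hw : fr.WConv us w) {K M : ℝ}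
    (hK : ∀ n, ip (fr.ν n) (us n) (us n) ≤ K)
    (hM : ∀ n, ip (fr.ν n) ((sg n).Af (us n)) ((sg n).Af (us n)) ≤ M)
    {σ₀ : ℕ → ℕ} (hσ₀ : StrictMono σ₀) {T : ℝ}
    (hT : Tendsto (fun k => (sg (σ₀ k)).Sb β (us (σ₀ k)) (us (σ₀ k))) atTop (𝓝 T))
    (hψ_meas : Measurable ψ) (hψ_L2 : MemLp ψ 2 (fr.ν 0)) {ψs : ℕ → E → ℝ}
    (hψs : ∀ n, ψs n ∈ fr.C ∧ (sg n).memD (ψs n)) (hψs_conv : fr.SConv ψs ψ) {M' : ℝ}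
    (hM' : ∀ n, ip (fr.ν n) ((sg n).Af (ψs n)) ((sg n).Af (ψs n)) ≤ M')
    (hlimsup : limsup (fun n => (sg n).S (ψs n) (ψs n)) atTop ≤ (sg 0).S ψ ψ) {a b : ℝ}
    (ha : Tendsto (fun n => (sg n).Sb β (ψs n) (us n)) atTop (𝓝 a))
    (hb : Tendsto (fun n => (sg n).Sb β (us n) (ψs n)) atTop (𝓝 b)) :
    (sg 0).Sb β (fun x => ψ x - w x) (fun x => ψ x - w x) ≤ (sg 0).Sb β ψ ψ - a - b + T := by
  have hus_L2 n := fr.memLp_of_mem_C (hus n).1 n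
  have hψs_L2 n := fr.memLp_of_mem_C (hψs n).1 n
  obtain ⟨N, hN⟩ := hψs_conv.2.bddAbove_range
  have hψs_norm n : ‖toL2 (fr.ν n) (ψs n)‖ ≤ √N :=
    norm_toL2_le_sqrt (hψs_L2 n) (hN (Set.mem_range_self n))
  obtain ⟨σ, L, hσ, hL, hle⟩ := hpre.exists_tendsto_Sb_ge hβ (φ := fun x => ψ x - w x)
    (hψ_meas.sub hw_meas) (memLp_sub hψ_L2 hw_L2) (fun n => ⟨fr.sub_mem_C (hψs n).1 (hus n).1,
      (sg n).memD_sub (hψs_L2 n) (hus_L2 n) (hψs n).2 (hus n).2⟩)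
    (hψs_conv.1.sub hψs_L2 hus_L2 hψ_L2 hw_L2 hw)
    (fun n => by
      rw [toL2_sub (hψs_L2 n) (hus_L2 n)]
      exact (norm_sub_le _ _).trans (add_le_add (hψs_norm n) (norm_toL2_le_sqrt (hus_L2 n) (hK n))))
    (fun n => by
      rw [toL2_sub (hψs_L2 n) (hus_L2 n), (sg n).gen_sub (hψs n).2 (hus n).2]
      exact (norm_sub_le _ _).trans (add_le_add ((sg n).norm_gen_toL2_le (hM' n))
        ((sg n).norm_gen_toL2_le (hM n))))
    hσ₀
  have hτ := (hσ₀.comp hσ).tendsto_atTop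
  have hS : Tendsto (fun k => (sg (σ₀ (σ k))).S (ψs (σ₀ (σ k))) (ψs (σ₀ (σ k)))) atTop
      (𝓝 (L + a + b - T - β * ip (fr.ν 0) ψ ψ)) := by
    refine ((((hL.add (ha.comp hτ)).add (hb.comp hτ)).sub (hT.comp hσ.tendsto_atTop)).sub
      ((hψs_conv.2.comp hτ).const_mul β)).congr fun k => ?_
    simp only [Function.comp_apply, (sg _).Sb_sub_self (hψs_L2 (σ₀ (σ k))) (hus_L2 _)
      (hψs _).2 (hus _).2]
    simp only [Semigroup2.Sb]
    ring
  have hS_bdd : BddAbove (Set.range fun n => (sg n).S (ψs n) (ψs n)) :=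
    ⟨√M' * √N, Set.forall_mem_range.2 fun n => (le_abs_self _).trans
      (((sg n).abs_S_le _ (hψs_L2 n)).trans (mul_le_mul ((sg n).norm_gen_toL2_le (hM' n))
        (hψs_norm n) (norm_nonneg _) (Real.sqrt_nonneg _)))⟩
  have hS_le := le_of_tendsto_subseq_of_limsup_le (u := fun n => (sg n).S (ψs n) (ψs n))
    hτ hS hS_bdd hlimsup
  have hSb : (sg 0).Sb β ψ ψ = β * ip (fr.ν 0) ψ ψ + (sg 0).S ψ ψ := rfl
  linarith

/-- Apply `Sb_sub_le_of_recovery` to a recovery sequence `ψ_n` of `G_β g`: condition (iii)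
gives the limit of `S_{n,β}(ψ_n, u_n)`, and the hypothesis of (iii) that of `S_{n,β}(u_n, ψ_n)`. -/
lemma Sb_self_sub_le_of_condIII (hc : (sg 0).IsContraction) (hβ : 0 < β) (hc3 : CondC3 fr sg)
    (hpre : PreConv fr sg) {u w : E → ℝ} (hu_L2 : MemLp u 2 (fr.ν 0)) (hu_dom : (sg 0).memD u)
    (hw_meas : Measurable w) (hw_L2 : MemLp w 2 (fr.ν 0)) (hw_dom : (sg 0).memD w)
    {us : ℕ → E → ℝ} (hus : ∀ n, us n ∈ fr.C ∧ (sg n).memD (us n)) (hw : fr.WConv us w)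
    {K M : ℝ} (hK : ∀ n, ip (fr.ν n) (us n) (us n) ≤ K)
    (hM : ∀ n, ip (fr.ν n) ((sg n).Af (us n)) ((sg n).Af (us n)) ≤ M)
    (hblock : ∀ ψ ∈ fr.C, ∀ ψs : ℕ → E → ℝ, (∀ n, ψs n ∈ fr.C) → fr.SConv ψs ψ →
      Tendsto (fun n => (sg n).Sb β (us n) (ψs n)) atTop (𝓝 ((sg 0).Sb β u ψ)))
    (hiii : ∀ ψ : E → ℝ, Measurable ψ → MemLp ψ 2 (fr.ν 0) → (sg 0).memD ψ →
      ∀ ψs : ℕ → E → ℝ, (∀ n, ψs n ∈ fr.C ∧ (sg n).memD (ψs n)) → fr.SConv ψs ψ →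
      (∃ M : ℝ, ∀ n, ip (fr.ν n) ((sg n).Af (ψs n)) ((sg n).Af (ψs n)) ≤ M) →
      limsup (fun n => (sg n).S (ψs n) (ψs n)) atTop ≤ (sg 0).S ψ ψ →
      Tendsto (fun n => (sg n).Sb β (ψs n) (us n)) atTop (𝓝 ((sg 0).Sb β ψ u)))
    {σ₀ : ℕ → ℕ} (hσ₀ : StrictMono σ₀) {T : ℝ}
    (hT : Tendsto (fun k => (sg (σ₀ k)).Sb β (us (σ₀ k)) (us (σ₀ k))) atTop (𝓝 T))
    {g : E → ℝ} (hg : g ∈ fr.C) :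
    (sg 0).Sb β w w - T ≤
      ⟪toL2 (fr.ν 0) g, toL2 (fr.ν 0) w - toL2 (fr.ν 0) u⟫ +
      ⟪β • (toL2 (fr.ν 0) w - toL2 (fr.ν 0) u) - (sg 0).gen (toL2 (fr.ν 0) w - toL2 (fr.ν 0) u),
        (sg 0).res β (toL2 (fr.ν 0) g)⟫ := by
  set R := (sg 0).res β (toL2 (fr.ν 0) g)
  have hR_meas : Measurable R := (Lp.stronglyMeasurable R).measurable
  have hR_dom : (sg 0).memD R := by
    rw [Semigroup2.memD, toL2_coeFn]
    exact hc.memDom_res hβ _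
  obtain ⟨ψ', hψ', hRψ'⟩ := (hc3 g hg β hβ).1
  obtain ⟨ψs, hψs, hψs_conv, ⟨M', hM'⟩, hlimsup⟩ := hpre.2 R hR_meas (Lp.memLp R) hR_dom
  have hb := hblock ψ' hψ' ψs (fun n => (hψs n).1) ((fr.sConv_congr_ae hRψ').1 hψs_conv)
  rw [← (sg 0).Sb_congr_ae_right β u hRψ'] at hb
  exact hc.Sb_self_sub_le_of_Sb_sub_le hβ _ hu_L2 hw_L2 hu_dom hw_dom
    (Sb_sub_le_of_recovery hpre hβ.le hus hw_meas hw_L2 hw hK hM hσ₀ hT hR_meas (Lp.memLp R)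
      hψs hψs_conv hM' hlimsup
      (hiii R hR_meas (Lp.memLp R) hR_dom ψs hψs hψs_conv ⟨M', hM'⟩ hlimsup) hb)

end Convergence

/-- Lemma 2.8: if (c3) holds and the forms `S n` pre-converge to `S`, then condition
(iii) implies condition (iv). -/
theorem condIII_implies_condIV (fr : Frame E) (sg : ∀ n, Semigroup2 (fr.ν n))
    (hcontr : ∀ n, (sg n).IsContraction)
    (hc3 : CondC3 fr sg) (hpre : PreConv fr sg) (h3 : CondIII fr sg) : CondIV fr sg := by
  intro β hβ u hu_meas hu_L2 hu_dom us hus ⟨w, hw_meas, hw_L2, hw⟩ ⟨M, hM⟩ hV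
  have hus_L2 n := fr.memLp_of_mem_C (hus n).1 n
  obtain ⟨K, hK⟩ := fr.bddAbove_ip_self_of_wConv (fun n => (hus n).1) hw
  have hV_bdd n := (sg n).ip_smul_sub_Af_le (hus_L2 n) hβ.le (hK (Set.mem_range_self n)) (hM n)
  have hblock : ∀ ψ ∈ fr.C, ∀ ψs : ℕ → E → ℝ, (∀ n, ψs n ∈ fr.C) → fr.SConv ψs ψ →
      Tendsto (fun n => (sg n).Sb β (us n) (ψs n)) atTop (𝓝 ((sg 0).Sb β u ψ)) :=
    fun ψ hψ ψs hψs => tendsto_Sb_of_sConv hus_L2 hu_L2 hV_bdd hV hψs hψ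
  have hiii := h3 β hβ u hu_meas hu_L2 hu_dom us hus ⟨w, hw_meas, hw_L2, hw⟩ ⟨M, hM⟩ hblock
  have hSb_bdd n := (sg n).abs_Sb_self_le (hus_L2 n) hβ.le (hK (Set.mem_range_self n)) (hM n)
  obtain ⟨T, -, σ₀, hσ₀, hT⟩ := tendsto_subseq_of_bounded (Metric.isBounded_Icc _ _)
    fun n => Set.mem_Icc.2 (abs_le.1 (hSb_bdd n))
  have hus_dom n : us n ∈ fr.C ∧ (sg n).memD (us n) := ⟨(hus n).1, (hus n).2.1⟩
  have hw_dom := (hpre.1 w hw_meas hw_L2 id strictMono_id us hus_dom hw ⟨M, hM⟩).1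
  have he := (hcontr 0).eq_zero_of_forall_le hβ fr.dense_toL2_C fr.smul_mem_toL2_C
    ((sg 0).memDom_sub hw_dom hu_dom) (by
      rintro _ ⟨g, hg, rfl⟩
      exact Sb_self_sub_le_of_condIII (hcontr 0) hβ hc3 hpre hu_L2 hu_dom hw_meas hw_L2 hw_dom
        hus_dom hw (fun n => hK (Set.mem_range_self n)) hM hblock hiii hσ₀ hT hg)
  exact (fr.wConv_congr_ae (ae_eq_of_toL2_eq hw_L2 hu_L2 (sub_eq_zero.1 he))).1 hw

end Mosco
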